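/- For every monotone f : M → L with M a finite rooted poset, ev_f is the unique Heyting algebra homomorphism g : S(h_L) → D(M) with g ∘ ι_L = D(f). -/

import Mathlib

/-- A finite rooted poset: a finite partial order with a greatest element (the root). -/
structure FRP : Type 1 where
  carrier : Type
  [po : PartialOrder carrier]
  [fin : Finite carrier]
  root : carrier
  le_root : ∀ x : carrier, x ≤ root

attribute [instance] FRP.po FRP.fin

/-- The downset of a point, as a finite rooted poset. -/
def FRP.down (P : FRP) (p : P.carrier) : FRP where
  carrier := {x : P.carrier // x ≤ p}
  root := ⟨p, le_refl p⟩
  le_root := fun x => x.2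

/-- An `L`-evaluation: a monotone map from a finite rooted poset into `L`. -/
structure Eval (L : Type) [PartialOrder L] : Type 1 where
  P : FRP
  map : P.carrier → L
  mono : Monotone map

variable {L : Type} [PartialOrder L]

/-- Restriction of an evaluation to the downset of a point. -/
def Eval.restrict (u : Eval L) (p : u.P.carrier) : Eval L where
  P := u.P.down p
  map := fun x => u.map x.1
  mono := fun _ _ h => u.mono h

/-- The value of an evaluation at the root of its domain. -/
def Eval.rootVal (u : Eval L) : L := u.map u.P.root

/-- The relations `∼ₙ` on `L`-evaluations. -/
def sim (L : Type) [PartialOrder L] : ℕ → Eval L → Eval L → Prop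
  | 0 => fun u v => u.rootVal = v.rootVal
  | n+1 => fun u v =>
      (∀ p, ∃ q, sim L n (u.restrict p) (v.restrict q)) ∧
      (∀ q, ∃ p, sim L n (v.restrict q) (u.restrict p))

/-- The relations `≤ₙ`: `lev L n v u` means `v ≤ₙ u`. -/
def lev (L : Type) [PartialOrder L] : ℕ → Eval L → Eval L → Prop
  | 0 => fun v u => v.rootVal ≤ u.rootVal
  | n+1 => fun v u => ∀ q, ∃ p, sim L n (v.restrict q) (u.restrict p)

/-- `S` is a subpresheaf of `h_L`: closed under restriction. -/
def IsSub (L : Type) [PartialOrder L] (S : Set (Eval L)) : Prop :=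
  ∀ u ∈ S, ∀ p, u.restrict p ∈ S

/-- `S` has b-index `n`: closed under `∼ₙ`. -/
def BIndex (L : Type) [PartialOrder L] (n : ℕ) (S : Set (Eval L)) : Prop :=
  ∀ u ∈ S, ∀ v, sim L n u v → v ∈ S

/-- `S` has b≤-index `n`: closed under being `≤ₙ`-below a member. -/
def BleIndex (L : Type) [PartialOrder L] (n : ℕ) (S : Set (Eval L)) : Prop :=
  ∀ u ∈ S, ∀ v, lev L n v u → v ∈ S

/-- `↓ₙ u`. -/
def downSet (L : Type) [PartialOrder L] (n : ℕ) (u : Eval L) : Set (Eval L) :=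
  {v | lev L n v u}

/-- Pointwise description of Heyting implication of subpresheaves. -/
def himpPt (L : Type) [PartialOrder L] (S T : Set (Eval L)) : Set (Eval L) :=
  {u | ∀ p, u.restrict p ∈ S → u.restrict p ∈ T}

/-- The embedding of downward closed subsets of `L` into subpresheaves. -/
def iota (L : Type) [PartialOrder L] (d : Set L) : Set (Eval L) :=
  {u | u.rootVal ∈ d}

/-- Membership in the Heyting algebra `S(h_L)`: subpresheaves with a b-index. -/
def InS (L : Type) [PartialOrder L] (S : Set (Eval L)) : Prop :=
  IsSub L S ∧ ∃ n, BIndex L n S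

/-- `ev_f`. -/
def evalMap (L : Type) [PartialOrder L] (f : Eval L) (X : Set (Eval L)) : Set f.P.carrier :=
  {p | f.restrict p ∈ X}

/-- Heyting implication of downward closed subsets of a poset. -/
def himpD {M : Type} [PartialOrder M] (a b : Set M) : Set M :=
  {p | ∀ q ≤ p, q ∈ a → q ∈ b}

/-!
Write `↓ₙ u` for the `≤ₙ`-downset of an evaluation `u` and `Cₙ u` (`coUpSet n u`) for the
complement of its `≤ₙ`-upset. At level `0` both are images of `ι_L`. At level `n + 1` they are
obtained from the sets `↓ₙ (u|p)` and `Cₙ (u|p)`, `p` ranging over the finite poset of `u`, by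
finite meets, joins and Heyting implications. So `g` and `ev_f`, both Heyting homomorphisms
extending `D(f)` along `ι_L`, agree on every `↓ₙ u`. Finally, a subpresheaf `X` with b-index `n`
is the union of the sets `↓ₙ₊₁ u` with `u ∈ X`, and since `L` is finite there are only finitely
many such sets: `↓ₙ₊₁ u` is determined by the set of the `↓ₙ (u|p)`.
-/

open Set

theorem Eval.map_le_rootVal (u : Eval L) (p : u.P.carrier) : u.map p ≤ u.rootVal :=
  u.mono (u.P.le_root p)

section Relations

theorem sim_symm : ∀ {n : ℕ} {u v : Eval L}, sim L n u v → sim L n v u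
  | 0, _, _, h => h.symm
  | _ + 1, _, _, h => ⟨h.2, h.1⟩

theorem sim_refl : ∀ (n : ℕ) (u : Eval L), sim L n u u
  | 0, _ => rfl
  | n + 1, _ => ⟨fun p => ⟨p, sim_refl n _⟩, fun p => ⟨p, sim_refl n _⟩⟩

theorem sim_iff_lev {n : ℕ} {u v : Eval L} : sim L n u v ↔ lev L n u v ∧ lev L n v u := by
  cases n with
  | zero => exact le_antisymm_iff
  | succ n => exact Iff.rfl

theorem lev_refl (n : ℕ) (u : Eval L) : lev L n u u :=
  (sim_iff_lev.1 (sim_refl n u)).1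

theorem lev_trans : ∀ {n : ℕ} {u v w : Eval L}, lev L n u v → lev L n v w → lev L n u w
  | 0, _, _, _, huv, hvw => le_trans huv hvw
  | n + 1, _, _, _, huv, hvw => fun q => by
    obtain ⟨p, hp⟩ := huv q
    obtain ⟨r, hr⟩ := hvw p
    obtain ⟨hp₁, hp₂⟩ := sim_iff_lev.1 hp
    obtain ⟨hr₁, hr₂⟩ := sim_iff_lev.1 hr
    exact ⟨r, sim_iff_lev.2 ⟨lev_trans hp₁ hr₁, lev_trans hr₂ hp₂⟩⟩

theorem sim_of_sim_succ : ∀ {n : ℕ} {u v : Eval L}, sim L (n + 1) u v → sim L n u v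
  | 0, u, v, ⟨huv, hvu⟩ => by
    obtain ⟨q, hq⟩ := huv u.P.root
    obtain ⟨p, hp⟩ := hvu v.P.root
    exact le_antisymm (hq.trans_le (v.map_le_rootVal q)) (hp.trans_le (u.map_le_rootVal p))
  | _ + 1, _, _, ⟨huv, hvu⟩ =>
    ⟨fun p => (huv p).imp fun _ => sim_of_sim_succ,
      fun q => (hvu q).imp fun _ => sim_of_sim_succ⟩

theorem sim_antitone : Antitone (sim L) :=
  antitone_nat_of_succ_le fun _ _ _ => sim_of_sim_succ

end Relations

section Isomorphism

def Eval.Isomorphic (u v : Eval L) : Prop :=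
  ∃ e : u.P.carrier ≃o v.P.carrier, ∀ x, v.map (e x) = u.map x

theorem Eval.Isomorphic.symm {u v : Eval L} : u.Isomorphic v → v.Isomorphic u := by
  rintro ⟨e, he⟩
  exact ⟨e.symm, fun y => by rw [← he, e.apply_symm_apply]⟩

theorem Eval.Isomorphic.restrict {u v : Eval L} (e : u.P.carrier ≃o v.P.carrier)
    (he : ∀ x, v.map (e x) = u.map x) (p : u.P.carrier) :
    (u.restrict p).Isomorphic (v.restrict (e p)) :=
  ⟨⟨e.toEquiv.subtypeEquiv fun _ => e.le_iff_le.symm, e.le_iff_le⟩, fun x => he x.1⟩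

theorem Eval.Isomorphic.sim : ∀ (n : ℕ) {u v : Eval L}, u.Isomorphic v → sim L n u v
  | 0, u, v, ⟨e, he⟩ => by
    have hroot : e u.P.root = v.P.root :=
      le_antisymm (v.P.le_root _) (e.symm_apply_le.1 (u.P.le_root _))
    show u.rootVal = v.rootVal
    rw [Eval.rootVal, Eval.rootVal, ← hroot, he]
  | n + 1, u, v, ⟨e, he⟩ =>
    ⟨fun p => ⟨e p, sim n (restrict e he p)⟩, fun q => ⟨e.symm q, by
      simpa using sim_symm (sim n (restrict e he (e.symm q)))⟩⟩

theorem Eval.isomorphic_restrict_root (u : Eval L) : u.Isomorphic (u.restrict u.P.root) :=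
  ⟨{ toFun := fun x => ⟨x, u.P.le_root x⟩, invFun := Subtype.val,
     left_inv := fun _ => rfl, right_inv := fun _ => rfl, map_rel_iff' := Iff.rfl }, fun _ => rfl⟩

theorem Eval.isomorphic_restrict_restrict (u : Eval L) (p : u.P.carrier)
    (q : (u.restrict p).P.carrier) : ((u.restrict p).restrict q).Isomorphic (u.restrict q.1) :=
  ⟨{ toFun := fun x => ⟨x.1.1, x.2⟩, invFun := fun y => ⟨⟨y.1, y.2.trans q.2⟩, y.2⟩,
     left_inv := fun _ => rfl, right_inv := fun _ => rfl, map_rel_iff' := Iff.rfl }, fun _ => rfl⟩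

end Isomorphism

section Subpresheaves

def coUpSet (n : ℕ) (u : Eval L) : Set (Eval L) :=
  {v | ¬ lev L n u v}

theorem downSet_eq_downSet_iff {n : ℕ} {u v : Eval L} :
    downSet L n u = downSet L n v ↔ sim L n u v := by
  rw [sim_iff_lev]
  refine ⟨fun h => ⟨show u ∈ downSet L n v from h ▸ lev_refl n u,
    show v ∈ downSet L n u from h ▸ lev_refl n v⟩, fun ⟨huv, hvu⟩ => ?_⟩
  ext w
  exact ⟨fun hw => lev_trans hw huv, fun hw => lev_trans hw hvu⟩

theorem BIndex.mono {m n : ℕ} {S : Set (Eval L)} (hmn : m ≤ n) (hS : BIndex L m S) :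
    BIndex L n S :=
  fun u hu v huv => hS u hu v (sim_antitone hmn u v huv)

theorem InS.mem_of_isomorphic {S : Set (Eval L)} (hS : InS L S) {u v : Eval L} (hu : u ∈ S)
    (huv : u.Isomorphic v) : v ∈ S := by
  obtain ⟨-, n, hn⟩ := hS
  exact hn u hu v (huv.sim n)

theorem inS_iota {d : Set L} (hd : IsLowerSet d) : InS L (iota L d) :=
  ⟨fun u hu p => hd (u.map_le_rootVal p) hu, 0,
    fun u hu v (huv : u.rootVal = v.rootVal) => show v.rootVal ∈ d from huv ▸ hu⟩

theorem InS.inter {S T : Set (Eval L)} (hS : InS L S) (hT : InS L T) : InS L (S ∩ T) := by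
  obtain ⟨hS, m, hSm⟩ := hS
  obtain ⟨hT, n, hTn⟩ := hT
  exact ⟨fun u hu p => ⟨hS u hu.1 p, hT u hu.2 p⟩, max m n, fun u hu v huv =>
    ⟨(hSm.mono (le_max_left m n)) u hu.1 v huv, (hTn.mono (le_max_right m n)) u hu.2 v huv⟩⟩

theorem InS.union {S T : Set (Eval L)} (hS : InS L S) (hT : InS L T) : InS L (S ∪ T) := by
  obtain ⟨hS, m, hSm⟩ := hS
  obtain ⟨hT, n, hTn⟩ := hT
  exact ⟨fun u hu p => hu.imp (hS u · p) (hT u · p), max m n, fun u hu v huv =>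
    hu.imp ((hSm.mono (le_max_left m n)) u · v huv) ((hTn.mono (le_max_right m n)) u · v huv)⟩

theorem InS.himpPt {S T : Set (Eval L)} (hS : InS L S) (hT : InS L T) :
    InS L (himpPt L S T) := by
  obtain ⟨-, m, hSm⟩ := hS
  obtain ⟨-, n, hTn⟩ := hT
  refine ⟨fun u hu p q hq => ?_, max m n + 1, fun u hu v huv q hq => ?_⟩
  · have hqq := u.isomorphic_restrict_restrict p q
    exact hTn _ (hu q.1 (hSm _ hq _ (hqq.sim m))) _ (hqq.symm.sim n)
  · obtain ⟨p, hp⟩ := huv.2 q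
    exact (hTn.mono (le_max_right m n)) _ (hu p ((hSm.mono (le_max_left m n)) _ hq _ hp)) _
      (sim_symm hp)

end Subpresheaves

section Recursion

theorem downSet_zero (u : Eval L) : downSet L 0 u = iota L (Iic u.rootVal) := rfl

theorem coUpSet_zero (u : Eval L) : coUpSet 0 u = iota L (Ici u.rootVal)ᶜ := rfl

/-- Quantifying in advance over the set `S` of points `p` with `u|p ≰ₙ v|q` turns
`∀ q, ∃ p, v|q ∼ₙ u|p` into a meet of Heyting implications. -/
theorem downSet_succ (n : ℕ) (u : Eval L) :
    downSet L (n + 1) u = ⋂ S : Set u.P.carrier, himpPt L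
      (⋂ p ∈ S, coUpSet n (u.restrict p)) (⋃ p ∈ Sᶜ, downSet L n (u.restrict p)) := by
  ext v
  simp only [downSet, coUpSet, himpPt, mem_iInter, mem_iUnion, mem_ofPred_eq, mem_compl_iff,
    exists_prop]
  constructor
  · intro hvu S q hS
    obtain ⟨p, hp⟩ := hvu q
    obtain ⟨hqp, hpq⟩ := sim_iff_lev.1 hp
    exact ⟨p, fun hpS => hS p hpS hpq, hqp⟩
  · intro h q
    obtain ⟨p, hpq, hqp⟩ := h {p | ¬ lev L n (u.restrict p) (v.restrict q)} q fun _ => id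
    exact ⟨p, sim_iff_lev.2 ⟨hqp, not_not.1 hpq⟩⟩

theorem coUpSet_succ (n : ℕ) (u : Eval L) :
    coUpSet (n + 1) u =
      ⋃ p, himpPt L (downSet L n (u.restrict p)) (coUpSet n (u.restrict p)) := by
  ext v
  simp only [coUpSet, downSet, himpPt, mem_iUnion, mem_ofPred_eq]
  constructor
  · intro h
    obtain ⟨p, hp⟩ := not_forall.1 h
    exact ⟨p, fun q hqp hpq => hp ⟨q, sim_iff_lev.2 ⟨hpq, hqp⟩⟩⟩
  · rintro ⟨p, hp⟩ huv
    obtain ⟨q, hq⟩ := huv p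
    exact hp q (sim_iff_lev.1 hq).2 (sim_iff_lev.1 hq).1

theorem downSet_succ_eq_setOf (n : ℕ) (u : Eval L) :
    downSet L (n + 1) u =
      {v | ∀ q, downSet L n (v.restrict q) ∈ range fun p => downSet L n (u.restrict p)} := by
  ext v
  exact forall_congr' fun q => exists_congr fun p =>
    (downSet_eq_downSet_iff.trans ⟨sim_symm, sim_symm⟩).symm

theorem finite_range_downSet [Finite L] : ∀ n, (range (downSet L n)).Finite
  | 0 => (finite_range fun a => iota L (Iic a)).subset <| by
      rintro _ ⟨u, rfl⟩
      exact ⟨u.rootVal, rfl⟩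
  | n + 1 => ((finite_range_downSet n).finite_subsets.image
      fun 𝒟 => {v : Eval L | ∀ q, downSet L n (v.restrict q) ∈ 𝒟}).subset <| by
      rintro _ ⟨u, rfl⟩
      exact ⟨_, range_subset_iff.2 fun p => mem_range_self _, (downSet_succ_eq_setOf n u).symm⟩

theorem biUnion_downSet_succ {X : Set (Eval L)} (hX : IsSub L X) {n : ℕ} (hXn : BIndex L n X) :
    ⋃ u ∈ X, downSet L (n + 1) u = X := by
  refine Subset.antisymm (iUnion₂_subset fun u hu v hvu => ?_)
    fun u hu => mem_biUnion hu (lev_refl (n + 1) u)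
  obtain ⟨p, hp⟩ := hvu v.P.root
  have hroot : v.restrict v.P.root ∈ X := hXn _ (hX u hu p) _ (sim_symm hp)
  exact hXn _ hroot _ (sim_symm (v.isomorphic_restrict_root.sim n))

end Recursion

section Homomorphisms

variable {f : Eval L}

theorem evalMap_himpPt {S T : Set (Eval L)} (hS : InS L S) (hT : InS L T) :
    evalMap L f (himpPt L S T) = himpD (evalMap L f S) (evalMap L f T) := by
  ext p
  refine ⟨fun h q hqp hq => ?_, fun h q hq => ?_⟩
  · have hqq := f.isomorphic_restrict_restrict p ⟨q, hqp⟩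
    exact hT.mem_of_isomorphic (h ⟨q, hqp⟩ (hS.mem_of_isomorphic hq hqq.symm)) hqq
  · have hqq := f.isomorphic_restrict_restrict p q
    exact hT.mem_of_isomorphic (h q.1 q.2 (hS.mem_of_isomorphic hq hqq)) hqq.symm

/-- A Heyting algebra homomorphism `g : S(h_L) → D(M)` with `g ∘ ι_L = D(f)`: the operations
need only be preserved on members of `S(h_L)`. -/
structure IsHeytingHomExtending (f : Eval L) (g : Set (Eval L) → Set f.P.carrier) : Prop where
  map_iota : ∀ d : Set L, IsLowerSet d → g (iota L d) = f.map ⁻¹' d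
  map_inter : ∀ S T, InS L S → InS L T → g (S ∩ T) = g S ∩ g T
  map_union : ∀ S T, InS L S → InS L T → g (S ∪ T) = g S ∪ g T
  map_himpPt : ∀ S T, InS L S → InS L T → g (himpPt L S T) = himpD (g S) (g T)

def AgreesOn (f : Eval L) (g : Set (Eval L) → Set f.P.carrier) (S : Set (Eval L)) : Prop :=
  InS L S ∧ g S = evalMap L f S

variable {g : Set (Eval L) → Set f.P.carrier}

theorem agreesOn_iota (hg : IsHeytingHomExtending f g) {d : Set L} (hd : IsLowerSet d) :
    AgreesOn f g (iota L d) :=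
  ⟨inS_iota hd, hg.map_iota d hd⟩

theorem AgreesOn.inter (hg : IsHeytingHomExtending f g) {S T : Set (Eval L)}
    (hS : AgreesOn f g S) (hT : AgreesOn f g T) : AgreesOn f g (S ∩ T) :=
  ⟨hS.1.inter hT.1, by rw [hg.map_inter S T hS.1 hT.1, hS.2, hT.2]; rfl⟩

theorem AgreesOn.union (hg : IsHeytingHomExtending f g) {S T : Set (Eval L)}
    (hS : AgreesOn f g S) (hT : AgreesOn f g T) : AgreesOn f g (S ∪ T) :=
  ⟨hS.1.union hT.1, by rw [hg.map_union S T hS.1 hT.1, hS.2, hT.2]; rfl⟩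

theorem AgreesOn.himpPt (hg : IsHeytingHomExtending f g) {S T : Set (Eval L)}
    (hS : AgreesOn f g S) (hT : AgreesOn f g T) :
    AgreesOn f g (himpPt L S T) :=
  ⟨hS.1.himpPt hT.1, by rw [hg.map_himpPt S T hS.1 hT.1, hS.2, hT.2, evalMap_himpPt hS.1 hT.1]⟩

theorem agreesOn_biUnion (hg : IsHeytingHomExtending f g) {ι : Type*} {s : Set ι}
    (hs : s.Finite) {F : ι → Set (Eval L)} (hF : ∀ i ∈ s, AgreesOn f g (F i)) :
    AgreesOn f g (⋃ i ∈ s, F i) := by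
  induction s, hs using Set.Finite.induction_on with
  | empty => simpa [iota] using agreesOn_iota hg isLowerSet_empty
  | @insert i s _ _ ih =>
    rw [biUnion_insert]
    exact (hF i (mem_insert i s)).union hg (ih fun j hj => hF j (mem_insert_of_mem i hj))

theorem agreesOn_biInter (hg : IsHeytingHomExtending f g) {ι : Type*} {s : Set ι}
    (hs : s.Finite) {F : ι → Set (Eval L)} (hF : ∀ i ∈ s, AgreesOn f g (F i)) :
    AgreesOn f g (⋂ i ∈ s, F i) := by
  induction s, hs using Set.Finite.induction_on with
  | empty => simpa [iota] using agreesOn_iota hg isLowerSet_univ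
  | @insert i s _ _ ih =>
    rw [biInter_insert]
    exact (hF i (mem_insert i s)).inter hg (ih fun j hj => hF j (mem_insert_of_mem i hj))

theorem agreesOn_iUnion (hg : IsHeytingHomExtending f g) {ι : Type*} [Finite ι]
    {F : ι → Set (Eval L)} (hF : ∀ i, AgreesOn f g (F i)) : AgreesOn f g (⋃ i, F i) := by
  simpa using agreesOn_biUnion hg finite_univ fun i _ => hF i

theorem agreesOn_iInter (hg : IsHeytingHomExtending f g) {ι : Type*} [Finite ι]
    {F : ι → Set (Eval L)} (hF : ∀ i, AgreesOn f g (F i)) : AgreesOn f g (⋂ i, F i) := by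
  simpa using agreesOn_biInter hg finite_univ fun i _ => hF i

theorem agreesOn_downSet_and_coUpSet (hg : IsHeytingHomExtending f g) :
    ∀ (n : ℕ) (u : Eval L), AgreesOn f g (downSet L n u) ∧ AgreesOn f g (coUpSet n u)
  | 0, u => by
    rw [downSet_zero, coUpSet_zero]
    exact ⟨agreesOn_iota hg (isLowerSet_Iic _), agreesOn_iota hg (isUpperSet_Ici _).compl⟩
  | n + 1, u => by
    have ih := agreesOn_downSet_and_coUpSet hg n
    rw [downSet_succ, coUpSet_succ]
    exact ⟨agreesOn_iInter hg fun S =>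
        (agreesOn_biInter hg S.toFinite fun p _ => (ih _).2).himpPt hg
          (agreesOn_biUnion hg Sᶜ.toFinite fun p _ => (ih _).1),
      agreesOn_iUnion hg fun p => (ih _).1.himpPt hg (ih _).2⟩

end Homomorphisms

/-- `ev_f` is the unique Heyting algebra homomorphism
`g : S(h_L) → D(M)` with `g ∘ ι_L = D(f)`. -/
theorem evalMap_unique (L : Type) [PartialOrder L] [Finite L] (f : Eval L)
    (g : Set (Eval L) → Set f.P.carrier)
    (hgι : ∀ d : Set L, IsLowerSet d → g (iota L d) = f.map ⁻¹' d)
    (hg_inter : ∀ S T : Set (Eval L), InS L S → InS L T → g (S ∩ T) = g S ∩ g T)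
    (hg_union : ∀ S T : Set (Eval L), InS L S → InS L T → g (S ∪ T) = g S ∪ g T)
    (hg_himp : ∀ S T : Set (Eval L), InS L S → InS L T →
      g (himpPt L S T) = himpD (g S) (g T)) :
    ∀ X : Set (Eval L), InS L X → g X = evalMap L f X := by
  have hg : IsHeytingHomExtending f g := ⟨hgι, hg_inter, hg_union, hg_himp⟩
  rintro X ⟨hX, n, hXn⟩
  have hfin : (downSet L (n + 1) '' X).Finite :=
    (finite_range_downSet (n + 1)).subset (image_subset_range _ _)
  have hagree := agreesOn_biUnion hg hfin fun _ ⟨u, _, hu⟩ =>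
    hu ▸ (agreesOn_downSet_and_coUpSet hg (n + 1) u).1
  rw [biUnion_image, biUnion_downSet_succ hX hXn] at hagree
  exact hagree.2
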